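/- The infimal convolution of Lebesgue-continuous risk measures inherits continuity from above: if each ρ_a has the Lebesgue property and (X^n) ⊆ L^∞(P) decreases pointwise a.s. to X ∈ L^∞(P), then inf_n (□_{a∈A} ρ_a μ(da))(X^n) = (□_{a∈A} ρ_a μ(da))(X), assuming the value function is globally finite. -/

import Mathlib

open MeasureTheory
noncomputable section

variable {Ω A : Type*} [MeasurableSpace Ω] [MeasurableSpace A]

/-- An allocation `(X_a)_{a ∈ A}` is `𝒜`-measurable if all the pairings
`a ↦ E[X_a Y]`, `Y ∈ L¹(P)`, are measurable. -/
def AllocMeasurable (P : Measure Ω) [IsProbabilityMeasure P]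
    (f : A → Lp ℝ ⊤ P) : Prop :=
  ∀ Y : Lp ℝ 1 P, Measurable fun a => ∫ ω, f a ω * Y ω ∂P

/-- An `X`-feasible allocation: a measurable, Gelfand integrable family whose Gelfand
integral is `X` (characterized through all pairings with `L¹(P)`). -/
def IsAllocOf (P : Measure Ω) [IsProbabilityMeasure P] (μ : Measure A)
    (f : A → Lp ℝ ⊤ P) (X : Lp ℝ ⊤ P) : Prop :=
  AllocMeasurable P f ∧
    ∀ Y : Lp ℝ 1 P, Integrable (fun a => ∫ ω, f a ω * Y ω ∂P) μ ∧
      ∫ a, (∫ ω, f a ω * Y ω ∂P) ∂μ = ∫ ω, X ω * Y ω ∂P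

/-- The set of attained total risks `∫_A ρ_a(X_a) μ(da)` over `X`-feasible allocations
with integrable risk; the integral infimal convolution is its infimum. -/
def valSet (P : Measure Ω) [IsProbabilityMeasure P] (μ : Measure A)
    (ρ : A → Lp ℝ ⊤ P → ℝ) (X : Lp ℝ ⊤ P) : Set ℝ :=
  {r : ℝ | ∃ f : A → Lp ℝ ⊤ P, IsAllocOf P μ f X ∧
    Integrable (fun a => ρ a (f a)) μ ∧ r = ∫ a, ρ a (f a) ∂μ}

/-- The Lebesgue property: continuity along `L^∞`-bounded sequences converging in
probability. -/
def LebesgueProperty (P : Measure Ω) [IsProbabilityMeasure P]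
    (ρ : Lp ℝ ⊤ P → ℝ) : Prop :=
  ∀ (Xn : ℕ → Lp ℝ ⊤ P) (X : Lp ℝ ⊤ P), (∃ M : ℝ, ∀ n, ‖Xn n‖ ≤ M) →
    TendstoInMeasure P (fun n => ⇑(Xn n)) Filter.atTop ⇑X →
    Filter.Tendsto (fun n => ρ (Xn n)) Filter.atTop (nhds (ρ X))

/-!
Monotonicity and cash additivity make each `ρ_a` 1-Lipschitz for the `L^∞` norm. Adding
`μ(A)⁻¹ Z` to every component of an allocation of `W` gives an allocation of `W + Z` whose total
risk is still integrable, by the Lipschitz bound. With `Z = Y - W ≤ 0` this shows that the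
infimal convolution is monotone, so the infimum over `n` is at least its value at `X`.
Conversely, for an allocation `f` of `X` take `Z = X^n - X`: the total risks of the shifted
allocations of `X^n` converge to `∫ ρ_a(f_a) dμ`, pointwise in `a` by the Lebesgue property of
`ρ_a`, and in the integral by dominated convergence with `|ρ_a(f_a)| + ‖X^0 - X‖ / μ(A)` as
dominating function.
-/

open Filter Topology
open scoped ENNReal

namespace MeasureTheory.Lp

variable {P : Measure Ω}

lemma ae_norm_le_norm_top {E : Type*} [NormedAddCommGroup E] (W : Lp E ∞ P) :
    ∀ᵐ ω ∂P, ‖W ω‖ ≤ ‖W‖ := by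
  simpa only [Lp.norm_def, toReal_eLpNorm (Lp.aestronglyMeasurable W)] using
    ae_le_lpNorm_exponent_top (Lp.memLp W)

section

variable {p : ℝ≥0∞} {Xn : ℕ → Lp ℝ p P} {X : Lp ℝ p P}

instance : PosSMulMono ℝ (Lp ℝ p P) :=
  PosSMulMono.of_smul_nonneg fun c hc Z hZ => by
    rw [← Lp.coeFn_le] at hZ ⊢
    filter_upwards [hZ, Lp.coeFn_smul c Z, Lp.coeFn_zero ℝ p P] with ω hω hsmul hzero
    rw [hzero] at hω ⊢
    rw [hsmul, Pi.smul_apply, smul_eq_mul]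
    exact mul_nonneg hc hω

lemma le_of_antitone_of_ae_tendsto (hXn : Antitone Xn)
    (hlim : ∀ᵐ ω ∂P, Tendsto (fun n => Xn n ω) atTop (𝓝 (X ω))) (n : ℕ) : X ≤ Xn n := by
  rw [← Lp.coeFn_le]
  filter_upwards [hlim, ae_all_iff.2 fun m => (Lp.coeFn_le _ _).2 (hXn (Nat.le_succ m))]
    with ω hω hdec
  exact (antitone_nat_of_succ_le hdec).le_of_tendsto hω n

lemma ae_tendsto_smul_sub_zero (c : ℝ)
    (hlim : ∀ᵐ ω ∂P, Tendsto (fun n => Xn n ω) atTop (𝓝 (X ω))) :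
    ∀ᵐ ω ∂P, Tendsto (fun n => (c • (Xn n - X)) ω) atTop (𝓝 0) := by
  filter_upwards [hlim, ae_all_iff.2 fun n => Lp.coeFn_smul c (Xn n - X),
    ae_all_iff.2 fun n => Lp.coeFn_sub (Xn n) X] with ω hω hsmul hsub
  simp only [hsmul, hsub, Pi.smul_apply, Pi.sub_apply, smul_eq_mul]
  simpa using (hω.sub_const (X ω)).const_mul c

end

variable [IsFiniteMeasure P]

lemma le_const_norm (W : Lp ℝ ∞ P) : W ≤ Lp.const ∞ P ‖W‖ := by
  rw [← Lp.coeFn_le]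
  filter_upwards [ae_norm_le_norm_top W, Lp.coeFn_const ∞ P ‖W‖] with ω hω hc
  rw [hc]
  exact (le_abs_self _).trans hω

lemma const_neg_norm_le (W : Lp ℝ ∞ P) : Lp.const ∞ P (-‖W‖) ≤ W := by
  rw [← Lp.coeFn_le]
  filter_upwards [ae_norm_le_norm_top W, Lp.coeFn_const ∞ P (-‖W‖)] with ω hω hc
  rw [hc]
  exact neg_le.1 ((neg_le_abs _).trans hω)

end MeasureTheory.Lp

section Pairing

variable {P : Measure Ω}

lemma integrable_mul_Linf_L1 (W : Lp ℝ ∞ P) (Y : Lp ℝ 1 P) :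
    Integrable (fun ω => W ω * Y ω) P :=
  (L1.integrable_coeFn Y).mul_of_top_right (Lp.memLp W)

lemma integral_add_mul_Linf_L1 (W Z : Lp ℝ ∞ P) (Y : Lp ℝ 1 P) :
    ∫ ω, (W + Z) ω * Y ω ∂P = (∫ ω, W ω * Y ω ∂P) + ∫ ω, Z ω * Y ω ∂P := by
  rw [← integral_add (integrable_mul_Linf_L1 W Y) (integrable_mul_Linf_L1 Z Y)]
  refine integral_congr_ae ?_
  filter_upwards [Lp.coeFn_add W Z] with ω h
  rw [h, Pi.add_apply, add_mul]

lemma integral_smul_mul_Linf_L1 (c : ℝ) (Z : Lp ℝ ∞ P) (Y : Lp ℝ 1 P) :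
    ∫ ω, (c • Z) ω * Y ω ∂P = c * ∫ ω, Z ω * Y ω ∂P := by
  rw [← integral_const_mul]
  refine integral_congr_ae ?_
  filter_upwards [Lp.coeFn_smul c Z] with ω h
  rw [h, Pi.smul_apply, smul_eq_mul, mul_assoc]

end Pairing

section RiskMeasure

variable {P : Measure Ω} [IsFiniteMeasure P]

def IsCashAdditive (ρ : Lp ℝ ∞ P → ℝ) : Prop :=
  ∀ (X : Lp ℝ ∞ P) (c : ℝ), ρ (X + Lp.const ∞ P c) = ρ X + c

variable {ρ : Lp ℝ ∞ P → ℝ}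

lemma IsCashAdditive.abs_sub_le_norm (hmono : Monotone ρ) (hcash : IsCashAdditive ρ)
    (X D : Lp ℝ ∞ P) : |ρ (X + D) - ρ X| ≤ ‖D‖ := by
  have hup : ρ (X + D) ≤ ρ X + ‖D‖ :=
    (hmono (add_le_add_right (Lp.le_const_norm D) X)).trans_eq (hcash X ‖D‖)
  have hlow : ρ X - ‖D‖ ≤ ρ (X + D) :=
    (hcash X (-‖D‖)).symm.trans_le (hmono (add_le_add_right (Lp.const_neg_norm_le D) X))
  rw [abs_sub_le_iff]
  constructor <;> linarith

lemma IsCashAdditive.abs_map_add_le (hmono : Monotone ρ) (hcash : IsCashAdditive ρ)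
    (X D : Lp ℝ ∞ P) : |ρ (X + D)| ≤ |ρ X| + ‖D‖ := by
  linarith [abs_sub_abs_le_abs_sub (ρ (X + D)) (ρ X), hcash.abs_sub_le_norm hmono X D]

end RiskMeasure

lemma LebesgueProperty.tendsto_add {P : Measure Ω} [IsProbabilityMeasure P]
    {ρ : Lp ℝ ∞ P → ℝ} (hleb : LebesgueProperty P ρ) (X : Lp ℝ ∞ P) {D : ℕ → Lp ℝ ∞ P}
    {M : ℝ} (hbdd : ∀ n, ‖D n‖ ≤ M)
    (hD : ∀ᵐ ω ∂P, Tendsto (fun n => D n ω) atTop (𝓝 0)) :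
    Tendsto (fun n => ρ (X + D n)) atTop (𝓝 (ρ X)) := by
  refine hleb _ X ⟨‖X‖ + M, fun n => (norm_add_le _ _).trans (by linarith [hbdd n])⟩ ?_
  refine tendstoInMeasure_of_tendsto_ae (fun n => Lp.aestronglyMeasurable _) ?_
  filter_upwards [hD, ae_all_iff.2 fun n => Lp.coeFn_add X (D n)] with ω hω hadd
  simp only [hadd, Pi.add_apply]
  simpa using tendsto_const_nhds.add hω

section Allocation

variable {P : Measure Ω} [IsProbabilityMeasure P] {μ : Measure A} {f : A → Lp ℝ ∞ P}

lemma AllocMeasurable.add_const (hf : AllocMeasurable P f) (D : Lp ℝ ∞ P) :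
    AllocMeasurable P fun a => f a + D := by
  intro Y
  simp only [integral_add_mul_Linf_L1]
  exact (hf Y).add measurable_const

lemma IsAllocOf.measure_ne_zero (hf : IsAllocOf P μ f (Lp.const ∞ P 1)) : μ ≠ 0 := by
  rintro rfl
  have hone : ∫ ω, (Lp.const ∞ P (1 : ℝ)) ω * (Lp.const 1 P (1 : ℝ)) ω ∂P = 1 := by
    rw [integral_congr_ae (g := fun _ => (1 : ℝ))]
    · simp
    · filter_upwards [Lp.coeFn_const ∞ P (1 : ℝ), Lp.coeFn_const 1 P (1 : ℝ)] with ω h h'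
      rw [h, h', Function.const_apply, mul_one]
  have := (hf.2 (Lp.const 1 P 1)).2
  rw [integral_zero_measure, hone] at this
  exact zero_ne_one this

lemma IsAllocOf.add_smul [IsFiniteMeasure μ] (hμ : μ.real Set.univ ≠ 0) {W : Lp ℝ ∞ P}
    (hf : IsAllocOf P μ f W) (Z : Lp ℝ ∞ P) :
    IsAllocOf P μ (fun a => f a + (μ.real Set.univ)⁻¹ • Z) (W + Z) := by
  refine ⟨hf.1.add_const _, fun Y => ?_⟩
  simp only [integral_add_mul_Linf_L1, integral_smul_mul_Linf_L1]
  refine ⟨(hf.2 Y).1.add (integrable_const _), ?_⟩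
  rw [integral_add (hf.2 Y).1 (integrable_const _), (hf.2 Y).2, integral_const, smul_eq_mul,
    mul_inv_cancel_left₀ hμ]

end Allocation

section InfConvolution

variable {P : Measure Ω} [IsProbabilityMeasure P] {μ : Measure A} [IsFiniteMeasure μ]
  {ρ : A → Lp ℝ ∞ P → ℝ} {f : A → Lp ℝ ∞ P}

lemma integrable_risk_add (hmono : ∀ a, Monotone (ρ a)) (hcash : ∀ a, IsCashAdditive (ρ a))
    (hfam : ∀ f : A → Lp ℝ ∞ P, AllocMeasurable P f → Measurable fun a => ρ a (f a))
    (hf : AllocMeasurable P f) (hint : Integrable (fun a => ρ a (f a)) μ) (D : Lp ℝ ∞ P) :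
    Integrable (fun a => ρ a (f a + D)) μ :=
  (hint.abs.add (integrable_const ‖D‖)).mono' (hfam _ (hf.add_const D)).aestronglyMeasurable
    (ae_of_all _ fun a => (hcash a).abs_map_add_le (hmono a) (f a) D)

lemma mem_valSet_add (hmono : ∀ a, Monotone (ρ a)) (hcash : ∀ a, IsCashAdditive (ρ a))
    (hfam : ∀ f : A → Lp ℝ ∞ P, AllocMeasurable P f → Measurable fun a => ρ a (f a))
    (hμ : μ.real Set.univ ≠ 0) {W : Lp ℝ ∞ P} (hf : IsAllocOf P μ f W)
    (hint : Integrable (fun a => ρ a (f a)) μ) (Z : Lp ℝ ∞ P) :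
    ∫ a, ρ a (f a + (μ.real Set.univ)⁻¹ • Z) ∂μ ∈ valSet P μ ρ (W + Z) :=
  ⟨_, hf.add_smul hμ Z, integrable_risk_add hmono hcash hfam hf.1 hint _, rfl⟩

lemma sInf_valSet_mono (hmono : ∀ a, Monotone (ρ a)) (hcash : ∀ a, IsCashAdditive (ρ a))
    (hfam : ∀ f : A → Lp ℝ ∞ P, AllocMeasurable P f → Measurable fun a => ρ a (f a))
    (hμ : μ.real Set.univ ≠ 0) {Y Z : Lp ℝ ∞ P} (hYZ : Y ≤ Z)
    (hZ : (valSet P μ ρ Z).Nonempty) (hY : BddBelow (valSet P μ ρ Y)) :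
    sInf (valSet P μ ρ Y) ≤ sInf (valSet P μ ρ Z) := by
  refine le_csInf hZ ?_
  rintro _ ⟨f, hf, hint, rfl⟩
  have hmem := mem_valSet_add hmono hcash hfam hμ hf hint (Y - Z)
  rw [add_sub_cancel] at hmem
  have hshift : (μ.real Set.univ)⁻¹ • (Y - Z) ≤ 0 :=
    smul_nonpos_of_nonneg_of_nonpos (inv_nonneg.2 measureReal_nonneg) (sub_nonpos.2 hYZ)
  calc sInf (valSet P μ ρ Y) ≤ ∫ a, ρ a (f a + (μ.real Set.univ)⁻¹ • (Y - Z)) ∂μ :=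
        csInf_le hY hmem
    _ ≤ ∫ a, ρ a (f a) ∂μ :=
        integral_mono (integrable_risk_add hmono hcash hfam hf.1 hint _) hint
          fun a => hmono a (add_le_of_nonpos_right hshift)

lemma tendsto_integral_risk_add (hmono : ∀ a, Monotone (ρ a))
    (hcash : ∀ a, IsCashAdditive (ρ a))
    (hfam : ∀ f : A → Lp ℝ ∞ P, AllocMeasurable P f → Measurable fun a => ρ a (f a))
    (hleb : ∀ a, LebesgueProperty P (ρ a)) (hf : AllocMeasurable P f)
    (hint : Integrable (fun a => ρ a (f a)) μ) {D : ℕ → Lp ℝ ∞ P} {M : ℝ}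
    (hbdd : ∀ n, ‖D n‖ ≤ M) (hD : ∀ᵐ ω ∂P, Tendsto (fun n => D n ω) atTop (𝓝 0)) :
    Tendsto (fun n => ∫ a, ρ a (f a + D n) ∂μ) atTop (𝓝 (∫ a, ρ a (f a) ∂μ)) :=
  tendsto_integral_of_dominated_convergence (fun a => |ρ a (f a)| + M)
    (fun n => (hfam _ (hf.add_const (D n))).aestronglyMeasurable)
    (hint.abs.add (integrable_const M))
    (fun n => ae_of_all _ fun a =>
      ((hcash a).abs_map_add_le (hmono a) (f a) (D n)).trans (by linarith [hbdd n]))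
    (ae_of_all _ fun a => (hleb a).tendsto_add (f a) hbdd hD)

end InfConvolution

/-- if each `ρ_a` has the Lebesgue property and the integral infimal
convolution is globally finite, then it is continuous from above: for a sequence
decreasing a.s. to `X`, `inf_n (□ ρ_a μ(da))(X^n) = (□ ρ_a μ(da))(X)`. -/
theorem integralInfConv_continuous_from_above
    (P : Measure Ω) [IsProbabilityMeasure P]
    (μ : Measure A) [IsFiniteMeasure μ]
    (ρ : A → Lp ℝ ⊤ P → ℝ)
    (hmono : ∀ a, ∀ X Y : Lp ℝ ⊤ P, X ≤ Y → ρ a X ≤ ρ a Y)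
    (hcash : ∀ a, ∀ (X : Lp ℝ ⊤ P) (c : ℝ), ρ a (X + Lp.const ⊤ P c) = ρ a X + c)
    (hfam : ∀ f : A → Lp ℝ ⊤ P, AllocMeasurable P f → Measurable fun a => ρ a (f a))
    (hleb : ∀ a, LebesgueProperty P (ρ a))
    (hfin : ∀ X : Lp ℝ ⊤ P, (valSet P μ ρ X).Nonempty ∧ BddBelow (valSet P μ ρ X))
    (Xn : ℕ → Lp ℝ ⊤ P) (X : Lp ℝ ⊤ P)
    (hdec : ∀ n, Xn (n + 1) ≤ Xn n)
    (hlim : ∀ᵐ ω ∂P, Filter.Tendsto (fun n => Xn n ω) Filter.atTop (nhds (X ω))) :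
    (⨅ n, sInf (valSet P μ ρ (Xn n))) = sInf (valSet P μ ρ X) := by
  have hμ : μ.real Set.univ ≠ 0 := by
    obtain ⟨-, f, hf, -⟩ := (hfin (Lp.const ⊤ P 1)).1
    have : NeZero μ := ⟨hf.measure_ne_zero⟩
    exact measureReal_univ_ne_zero
  have hanti : Antitone Xn := antitone_nat_of_succ_le hdec
  have hX_le := Lp.le_of_antitone_of_ae_tendsto hanti hlim
  have hle_Xn : ∀ n, sInf (valSet P μ ρ X) ≤ sInf (valSet P μ ρ (Xn n)) := fun n =>
    sInf_valSet_mono hmono hcash hfam hμ (hX_le n) (hfin _).1 (hfin X).2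
  refine le_antisymm (le_csInf (hfin X).1 ?_) (le_ciInf hle_Xn)
  rintro _ ⟨f, hf, hint, rfl⟩
  set D : ℕ → Lp ℝ ⊤ P := fun n => (μ.real Set.univ)⁻¹ • (Xn n - X)
  have hmem (n : ℕ) : ∫ a, ρ a (f a + D n) ∂μ ∈ valSet P μ ρ (Xn n) := by
    simpa using mem_valSet_add hmono hcash hfam hμ hf hint (Xn n - X)
  have hD_nonneg (n : ℕ) : 0 ≤ D n :=
    smul_nonneg (inv_nonneg.2 measureReal_nonneg) (sub_nonneg.2 (hX_le n))
  have hbdd (n : ℕ) : ‖D n‖ ≤ ‖D 0‖ := by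
    refine norm_le_norm_of_abs_le_abs ?_
    rw [abs_of_nonneg (hD_nonneg n), abs_of_nonneg (hD_nonneg 0)]
    exact smul_le_smul_of_nonneg_left (sub_le_sub_right (hanti (Nat.zero_le n)) X)
      (inv_nonneg.2 measureReal_nonneg)
  have hlb : BddBelow (Set.range fun n => sInf (valSet P μ ρ (Xn n))) :=
    ⟨_, Set.forall_mem_range.2 hle_Xn⟩
  exact ge_of_tendsto (tendsto_integral_risk_add hmono hcash hfam hleb hf.1 hint hbdd
      (Lp.ae_tendsto_smul_sub_zero _ hlim))
    (Eventually.of_forall fun n => (ciInf_le hlb n).trans (csInf_le (hfin _).2 (hmem n)))
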